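/- Let γ > 0, K > 0, and let Φ : ℝ² → ℝ be a twice continuously differentiable function with support contained in the disk {|x| ≤ K}, satisfying 0 ≤ Φ ≤ 1 and having bounded first and second derivatives. For R > 0 set Φ_R(x) = Φ(x/R). Then limsup_{R → ∞} ∫_{ℝ²} ∫_{ℝ²} e^{−γ|x−y|} |Φ_R(x) − Φ_R(y)|² dm(x) dm(y) ≤ 2 (∫_{ℝ²} |v|² e^{−γ|v|} dm(v)) · ∫_{ℝ²} ‖∇Φ(u)‖² dm(u). -/

import Mathlib

/-!
Writing `Φ_R(x) - Φ_R(x - v) = ∫₀¹ DΦ_R(x - t v) v dt` and applying Cauchy–Schwarz in `t` bounds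
the integrand by `e^{-γ|v|} |v|² ∫₀¹ ‖DΦ_R(x - t v)‖² dt`. Integrating in `x` first (Tonelli and
translation invariance) bounds the double integral by `(∫ |v|² e^{-γ|v|} dv) · ∫ ‖∇Φ_R‖²`, and in
the plane the Dirichlet energy is scale invariant: `∫ ‖∇Φ_R‖² = ∫ ‖∇Φ‖²`. So the bound holds for
every `R > 0`, even without the factor `2`.
-/

open MeasureTheory Filter Metric Set Module
open scoped ENNReal Nat

theorem sq_setIntegral_Ioc_le {h : ℝ → ℝ} (hh : Continuous h) :
    (∫ t in Ioc (0 : ℝ) 1, h t) ^ 2 ≤ ∫ t in Ioc (0 : ℝ) 1, h t ^ 2 := by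
  have : IsProbabilityMeasure (volume.restrict (Ioc (0 : ℝ) 1)) := ⟨by simp⟩
  exact (even_two.convexOn_pow).map_integral_le (continuousOn_pow 2) isClosed_univ
    (by simp) (hh.integrableOn_Ioc) ((hh.pow 2).integrableOn_Ioc)

theorem one_add_pow_mul_exp_neg_le (m : ℕ) {γ t : ℝ} (hγ : 0 < γ) (ht : 0 ≤ t) :
    (1 + t) ^ m * Real.exp (-γ * t) ≤ m ! * Real.exp γ / γ ^ m := by
  have h := Real.pow_div_factorial_le_exp (γ * (1 + t)) (by positivity) m
  rw [div_le_iff₀ (by positivity), mul_pow] at h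
  rw [le_div_iff₀ (by positivity)]
  calc (1 + t) ^ m * Real.exp (-γ * t) * γ ^ m
      = γ ^ m * (1 + t) ^ m * Real.exp (-γ * t) := by ring
    _ ≤ Real.exp (γ * (1 + t)) * m ! * Real.exp (-γ * t) := by gcongr
    _ = m ! * Real.exp γ := by
        rw [mul_comm _ (m ! : ℝ), mul_assoc, ← Real.exp_add]; ring_nf

section

variable {E : Type*} [NormedAddCommGroup E] [NormedSpace ℝ E]

theorem sub_eq_integral_fderiv_segment {f : E → ℝ} (hf : ContDiff ℝ 1 f) (x v : E) :
    f x - f (x - v) = ∫ t in Ioc (0 : ℝ) 1, fderiv ℝ f (x - t • v) v := by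
  have hderiv : ∀ t : ℝ, HasDerivAt (fun s : ℝ => -f (x - s • v)) (fderiv ℝ f (x - t • v) v) t := by
    intro t
    have hline : HasDerivAt (fun s : ℝ => x - s • v) (-v) t := by
      simpa using ((hasDerivAt_id t).smul_const v).const_sub x
    have h :=
      (((hf.differentiable one_ne_zero) (x - t • v)).hasFDerivAt.comp_hasDerivAt t hline).neg
    rw [map_neg, neg_neg] at h
    exact h
  have hcont := hf.continuous_fderiv one_ne_zero
  rw [← intervalIntegral.integral_of_le zero_le_one,
    intervalIntegral.integral_eq_sub_of_hasDerivAt (fun t _ => hderiv t)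
      (Continuous.intervalIntegrable (by fun_prop) _ _)]
  simp only [one_smul, zero_smul, sub_zero]
  ring

theorem sq_sub_le_setIntegral_sq_fderiv {f : E → ℝ} (hf : ContDiff ℝ 1 f) (x v : E) :
    (f x - f (x - v)) ^ 2 ≤ ‖v‖ ^ 2 * ∫ t in Ioc (0 : ℝ) 1, ‖fderiv ℝ f (x - t • v)‖ ^ 2 := by
  have hcont : Continuous (fun t : ℝ => fderiv ℝ f (x - t • v)) :=
    (hf.continuous_fderiv one_ne_zero).comp (by fun_prop)
  rw [sub_eq_integral_fderiv_segment hf, ← integral_const_mul]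
  refine (sq_setIntegral_Ioc_le (by fun_prop)).trans
    (setIntegral_mono ((by fun_prop : Continuous _).integrableOn_Ioc)
      ((by fun_prop : Continuous _).integrableOn_Ioc) fun t => ?_)
  rw [← sq_abs, mul_comm, ← mul_pow]
  exact pow_le_pow_left₀ (abs_nonneg _) ((fderiv ℝ f (x - t • v)).le_opNorm v) 2

theorem enorm_sub_sq_le_lintegral_enorm_fderiv_sq {f : E → ℝ} (hf : ContDiff ℝ 1 f) (x v : E) :
    ‖f x - f (x - v)‖ₑ ^ 2 ≤ ‖v‖ₑ ^ 2 * ∫⁻ t in Ioc (0 : ℝ) 1, ‖fderiv ℝ f (x - t • v)‖ₑ ^ 2 := by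
  have hint : IntegrableOn (fun t : ℝ => ‖fderiv ℝ f (x - t • v)‖ ^ 2) (Ioc 0 1) :=
    (((hf.continuous_fderiv one_ne_zero).comp (by fun_prop)).norm.pow 2).integrableOn_Ioc
  calc ‖f x - f (x - v)‖ₑ ^ 2 = ENNReal.ofReal ((f x - f (x - v)) ^ 2) := by
        rw [Real.enorm_eq_ofReal_abs, ← ENNReal.ofReal_pow (abs_nonneg _), sq_abs]
    _ ≤ ENNReal.ofReal (‖v‖ ^ 2 * ∫ t in Ioc (0 : ℝ) 1, ‖fderiv ℝ f (x - t • v)‖ ^ 2) :=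
        ENNReal.ofReal_le_ofReal (sq_sub_le_setIntegral_sq_fderiv hf x v)
    _ = _ := by
        rw [ENNReal.ofReal_mul (by positivity),
          ofReal_integral_eq_lintegral_ofReal hint (ae_of_all _ fun _ => by positivity)]
        simp only [ENNReal.ofReal_pow (norm_nonneg _), ofReal_norm]

variable [MeasurableSpace E] [BorelSpace E] (μ : Measure E)

theorem integrable_norm_fderiv_sq {f : E → ℝ} (hf : ContDiff ℝ 1 f) (hf_supp : HasCompactSupport f)
    [IsFiniteMeasureOnCompacts μ] :
    Integrable (fun u => ‖fderiv ℝ f u‖ ^ 2) μ := by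
  have hsupp : HasCompactSupport fun u => ‖fderiv ℝ f u‖ ^ 2 :=
    (hf_supp.fderiv ℝ).comp_left (g := fun L => ‖L‖ ^ 2) (by simp)
  exact ((hf.continuous_fderiv one_ne_zero).norm.pow 2).integrable_of_hasCompactSupport hsupp

variable [FiniteDimensional ℝ E] [μ.IsAddHaarMeasure]

theorem integrable_pow_norm_mul_exp_neg_mul_norm (n : ℕ) {γ : ℝ} (hγ : 0 < γ) :
    Integrable (fun v : E => ‖v‖ ^ n * Real.exp (-γ * ‖v‖)) μ := by
  set r := finrank ℝ E + 1
  set C := (n + r)! * Real.exp γ / γ ^ (n + r)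
  refine ((integrable_one_add_norm (μ := μ) (r := r) (by simp [r])).const_mul C).mono'
    (by fun_prop) (ae_of_all _ fun v => ?_)
  have hv : 0 < 1 + ‖v‖ := by positivity
  rw [Real.norm_of_nonneg (by positivity), Real.rpow_neg hv.le, Real.rpow_natCast,
    ← div_eq_mul_inv, le_div_iff₀ (by positivity)]
  calc ‖v‖ ^ n * Real.exp (-γ * ‖v‖) * (1 + ‖v‖) ^ r
      ≤ (1 + ‖v‖) ^ n * Real.exp (-γ * ‖v‖) * (1 + ‖v‖) ^ r := by
        gcongr; linarith
    _ = (1 + ‖v‖) ^ (n + r) * Real.exp (-γ * ‖v‖) := by ring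
    _ ≤ C := one_add_pow_mul_exp_neg_le _ hγ (norm_nonneg v)

theorem lintegral_lintegral_mul_enorm_sub_sq_le {ψ : E → ℝ} (hψ : ContDiff ℝ 1 ψ) {k : E → ℝ≥0∞}
    (hk : Measurable k) :
    ∫⁻ x, ∫⁻ y, k (x - y) * ‖ψ x - ψ y‖ₑ ^ 2 ∂μ ∂μ ≤
      (∫⁻ v, ‖v‖ₑ ^ 2 * k v ∂μ) * ∫⁻ u, ‖fderiv ℝ ψ u‖ₑ ^ 2 ∂μ := by
  have hcont := hψ.continuous_fderiv one_ne_zero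
  set F : E → E → ℝ → ℝ≥0∞ := fun x v t => k v * ‖v‖ₑ ^ 2 * ‖fderiv ℝ ψ (x - t • v)‖ₑ ^ 2
  have hF : Measurable fun p : (E × E) × ℝ => F p.1.1 p.1.2 p.2 := by
    simp only [F]; fun_prop
  calc ∫⁻ x, ∫⁻ y, k (x - y) * ‖ψ x - ψ y‖ₑ ^ 2 ∂μ ∂μ
      = ∫⁻ x, ∫⁻ v, k v * ‖ψ x - ψ (x - v)‖ₑ ^ 2 ∂μ ∂μ := by
        refine lintegral_congr fun x => ?_
        rw [← lintegral_sub_left_eq_self _ x]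
        simp only [sub_sub_cancel]
    _ ≤ ∫⁻ x, ∫⁻ v, (∫⁻ t in Ioc (0 : ℝ) 1, F x v t) ∂μ ∂μ := by
        refine lintegral_mono fun x => lintegral_mono fun v => ?_
        simp only [F]
        rw [lintegral_const_mul _ (by fun_prop), mul_assoc]
        gcongr
        exact enorm_sub_sq_le_lintegral_enorm_fderiv_sq hψ x v
    _ = ∫⁻ v, ∫⁻ x, (∫⁻ t in Ioc (0 : ℝ) 1, F x v t) ∂μ ∂μ :=
        lintegral_lintegral_swap hF.lintegral_prod_right'.aemeasurable
    _ = ∫⁻ v, (∫⁻ t in Ioc (0 : ℝ) 1, ∫⁻ x, F x v t ∂μ) ∂μ := by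
        refine lintegral_congr fun v => lintegral_lintegral_swap ?_
        exact (hF.comp (by fun_prop : Measurable fun p : E × ℝ => ((p.1, v), p.2))).aemeasurable
    _ = ∫⁻ v, (∫⁻ _ in Ioc (0 : ℝ) 1, k v * ‖v‖ₑ ^ 2 * ∫⁻ u, ‖fderiv ℝ ψ u‖ₑ ^ 2 ∂μ) ∂μ := by
        refine lintegral_congr fun v => lintegral_congr fun t => ?_
        rw [lintegral_const_mul _ (by fun_prop),
          lintegral_sub_right_eq_self (fun u => ‖fderiv ℝ ψ u‖ₑ ^ 2) (t • v)]
    _ = _ := by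
        simp only [setLIntegral_const, Real.volume_Ioc, sub_zero, ENNReal.ofReal_one, mul_one]
        rw [lintegral_mul_const _ (by fun_prop)]
        simp only [mul_comm]

theorem integral_integral_mul_sub_sq_le {ψ : E → ℝ} (hψ : ContDiff ℝ 1 ψ) {k : E → ℝ}
    (hk : Measurable k) (hk_nonneg : ∀ v, 0 ≤ k v)
    (hk_moment : Integrable (fun v => ‖v‖ ^ 2 * k v) μ)
    (hψ_energy : Integrable (fun u => ‖fderiv ℝ ψ u‖ ^ 2) μ) :
    ∫ x, ∫ y, k (x - y) * (ψ x - ψ y) ^ 2 ∂μ ∂μ ≤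
      (∫ v, ‖v‖ ^ 2 * k v ∂μ) * ∫ u, ‖fderiv ℝ ψ u‖ ^ 2 ∂μ := by
  have hrhs : 0 ≤ (∫ v, ‖v‖ ^ 2 * k v ∂μ) * ∫ u, ‖fderiv ℝ ψ u‖ ^ 2 ∂μ :=
    mul_nonneg (integral_nonneg fun v => mul_nonneg (by positivity) (hk_nonneg v))
      (integral_nonneg fun u => by positivity)
  rw [← ENNReal.ofReal_le_ofReal_iff hrhs]
  calc ENNReal.ofReal (∫ x, ∫ y, k (x - y) * (ψ x - ψ y) ^ 2 ∂μ ∂μ)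
      ≤ ∫⁻ x, ∫⁻ y, ‖k (x - y) * (ψ x - ψ y) ^ 2‖ₑ ∂μ ∂μ :=
        (Real.ofReal_le_enorm _).trans <| (enorm_integral_le_lintegral_enorm _).trans <|
          lintegral_mono fun x => enorm_integral_le_lintegral_enorm _
    _ = ∫⁻ x, ∫⁻ y, ENNReal.ofReal (k (x - y)) * ‖ψ x - ψ y‖ₑ ^ 2 ∂μ ∂μ := by
        simp only [enorm_mul, enorm_pow, Real.enorm_of_nonneg (hk_nonneg _)]
    _ ≤ (∫⁻ v, ‖v‖ₑ ^ 2 * ENNReal.ofReal (k v) ∂μ) * ∫⁻ u, ‖fderiv ℝ ψ u‖ₑ ^ 2 ∂μ :=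
        lintegral_lintegral_mul_enorm_sub_sq_le μ hψ hk.ennreal_ofReal
    _ = ENNReal.ofReal ((∫ v, ‖v‖ ^ 2 * k v ∂μ) * ∫ u, ‖fderiv ℝ ψ u‖ ^ 2 ∂μ) := by
        rw [ENNReal.ofReal_mul (integral_nonneg fun v => mul_nonneg (by positivity) (hk_nonneg v)),
          ofReal_integral_eq_lintegral_ofReal hk_moment
            (ae_of_all _ fun v => mul_nonneg (by positivity) (hk_nonneg v)),
          ofReal_integral_eq_lintegral_ofReal hψ_energy (ae_of_all _ fun u => by positivity)]
        simp only [ENNReal.ofReal_mul (sq_nonneg _), ENNReal.ofReal_pow (norm_nonneg _),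
          ofReal_norm]

theorem integral_norm_fderiv_comp_inv_smul_sq (f : E → ℝ) {R : ℝ} (hR : 0 ≤ R) :
    ∫ u, ‖fderiv ℝ (fun x => f (R⁻¹ • x)) u‖ ^ 2 ∂μ =
      R ^ finrank ℝ E / R ^ 2 * ∫ u, ‖fderiv ℝ f u‖ ^ 2 ∂μ := by
  simp_rw [fderiv_comp_smul, norm_smul, mul_pow]
  rw [integral_const_mul,
    Measure.integral_comp_inv_smul_of_nonneg μ (fun u => ‖fderiv ℝ f u‖ ^ 2) hR, smul_eq_mul, norm_inv, Real.norm_of_nonneg hR]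
  ring

end

theorem norm_gradient_eq_norm_fderiv {F : Type*} [NormedAddCommGroup F] [InnerProductSpace ℝ F]
    [CompleteSpace F] (f : F → ℝ) (x : F) : ‖gradient f x‖ = ‖fderiv ℝ f x‖ :=
  (InnerProductSpace.toDual ℝ F).symm.norm_map _

theorem stmt_5_general (γ K : ℝ) (hγ : 0 < γ)
    (Φ : EuclideanSpace ℝ (Fin 2) → ℝ)
    (hΦ : ContDiff ℝ 2 Φ)
    (hsupp : tsupport Φ ⊆ closedBall 0 K) :
    limsup (fun R : ℝ =>
        ∫ x : EuclideanSpace ℝ (Fin 2), ∫ y : EuclideanSpace ℝ (Fin 2),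
          Real.exp (-γ * ‖x - y‖) * |Φ (R⁻¹ • x) - Φ (R⁻¹ • y)| ^ 2) atTop
      ≤ 2 * (∫ v : EuclideanSpace ℝ (Fin 2), ‖v‖ ^ 2 * Real.exp (-γ * ‖v‖))
          * ∫ u, ‖gradient Φ u‖ ^ 2 := by
  have hΦ₁ : ContDiff ℝ 1 Φ := hΦ.of_le one_le_two
  have hΦ_supp : HasCompactSupport Φ :=
    (isCompact_closedBall 0 K).of_isClosed_subset (isClosed_tsupport Φ) hsupp
  have hbound : ∀ R : ℝ, 0 < R →
      ∫ x : EuclideanSpace ℝ (Fin 2), ∫ y : EuclideanSpace ℝ (Fin 2),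
          Real.exp (-γ * ‖x - y‖) * |Φ (R⁻¹ • x) - Φ (R⁻¹ • y)| ^ 2
        ≤ (∫ v : EuclideanSpace ℝ (Fin 2), ‖v‖ ^ 2 * Real.exp (-γ * ‖v‖))
          * ∫ u, ‖gradient Φ u‖ ^ 2 := by
    intro R hR
    have hψ : ContDiff ℝ 1 fun x => Φ (R⁻¹ • x) := hΦ₁.comp (contDiff_const_smul _)
    have h := integral_integral_mul_sub_sq_le volume hψ (k := fun v => Real.exp (-γ * ‖v‖))
      (by fun_prop) (fun v => (Real.exp_pos _).le)
      (integrable_pow_norm_mul_exp_neg_mul_norm volume 2 hγ)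
      (integrable_norm_fderiv_sq volume hψ (hΦ_supp.comp_smul (inv_ne_zero hR.ne')))
    rw [integral_norm_fderiv_comp_inv_smul_sq volume Φ hR.le, finrank_euclideanSpace_fin,
      div_self (by positivity), one_mul] at h
    simpa only [sq_abs, norm_gradient_eq_norm_fderiv] using h
  have hnonneg : 0 ≤ (∫ v : EuclideanSpace ℝ (Fin 2), ‖v‖ ^ 2 * Real.exp (-γ * ‖v‖))
      * ∫ u, ‖gradient Φ u‖ ^ 2 :=
    mul_nonneg (integral_nonneg fun v => by positivity) (integral_nonneg fun u => by positivity)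
  refine (limsup_le_of_le ?_ ((eventually_gt_atTop 0).mono hbound)).trans (by linarith)
  exact isCoboundedUnder_le_of_le atTop fun R =>
    integral_nonneg fun x => integral_nonneg fun y => by positivity

/-- For a `C²` test function `Φ : ℝ² → ℝ` supported in the disk of radius `K`, with
`0 ≤ Φ ≤ 1` and bounded first and second derivatives, setting `Φ_R(x) = Φ(x/R)`,
`limsup_{R→∞} ∫∫ e^{-γ|x-y|} |Φ_R(x) - Φ_R(y)|² dx dy
   ≤ 2 (∫ |v|² e^{-γ|v|} dv) ∫ ‖∇Φ‖²`. -/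
theorem stmt_5 (γ K : ℝ) (hγ : 0 < γ) (hK : 0 < K)
    (Φ : EuclideanSpace ℝ (Fin 2) → ℝ)
    (hΦ : ContDiff ℝ 2 Φ)
    (hsupp : tsupport Φ ⊆ closedBall 0 K)
    (hΦ01 : ∀ x, 0 ≤ Φ x ∧ Φ x ≤ 1)
    (hgrad : ∃ C₁, ∀ z, ‖gradient Φ z‖ ≤ C₁)
    (hhess : ∃ C₂, ∀ z, ‖fderiv ℝ (fderiv ℝ Φ) z‖ ≤ C₂) :
    limsup (fun R : ℝ =>
        ∫ x : EuclideanSpace ℝ (Fin 2), ∫ y : EuclideanSpace ℝ (Fin 2),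
          Real.exp (-γ * ‖x - y‖) * |Φ (R⁻¹ • x) - Φ (R⁻¹ • y)| ^ 2) atTop
      ≤ 2 * (∫ v : EuclideanSpace ℝ (Fin 2), ‖v‖ ^ 2 * Real.exp (-γ * ‖v‖))
          * ∫ u, ‖gradient Φ u‖ ^ 2 :=
  stmt_5_general γ K hγ Φ hΦ hsupp
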